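/- arXiv:1510.05448 — 6 statements merged into one kernel-verified Lean document; each statement's English description precedes it below -/
import Mathlib

section
/- Let (𝕍, ω) be a symplectic vector space over a field k with a Lagrangian direct sum decomposition 𝕍 = L₁ ⊕ L₂, with projectors pr₁, pr₂. For any Lagrangian subspace A ⊆ 𝕍, the bilinear form q^A on A defined by q^A(x,y) = ω(pr₁(x), pr₂(y)) is symmetric. -/
/-- Let `(𝕍, ω)` be a symplectic vector space over a field `k` with a
Lagrangian direct sum decomposition `𝕍 = L₁ ⊕ L₂`, with projectors `pr₁, pr₂`. For any
Lagrangian subspace `A ⊆ 𝕍`, the bilinear form `q^A(x,y) = ω(pr₁ x, pr₂ y)` on `A`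
is symmetric. -/
theorem stmt_0 {k V : Type*} [Field k] [AddCommGroup V] [Module k V] [FiniteDimensional k V]
    (ω : LinearMap.BilinForm k V) (halt : ω.IsAlt) (hnd : ω.Nondegenerate)
    (L₁ L₂ A : Submodule k V)
    (hL₁ : ω.orthogonal L₁ = L₁) (hL₂ : ω.orthogonal L₂ = L₂) (hA : ω.orthogonal A = A)
    (h : IsCompl L₁ L₂)
    (x y : V) (hx : x ∈ A) (hy : y ∈ A) :
    ω (Submodule.linearProjOfIsCompl L₁ L₂ h x) (Submodule.linearProjOfIsCompl L₂ L₁ h.symm y)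
      = ω (Submodule.linearProjOfIsCompl L₁ L₂ h y)
          (Submodule.linearProjOfIsCompl L₂ L₁ h.symm x) := by
  set x₁ : V := (Submodule.linearProjOfIsCompl L₁ L₂ h x : V) with hx₁
  set x₂ : V := (Submodule.linearProjOfIsCompl L₂ L₁ h.symm x : V) with hx₂
  set y₁ : V := (Submodule.linearProjOfIsCompl L₁ L₂ h y : V) with hy₁
  set y₂ : V := (Submodule.linearProjOfIsCompl L₂ L₁ h.symm y : V) with hy₂
  have hxsum : x₁ + x₂ = x := Submodule.projection_add_projection_eq_self h x
  have hysum : y₁ + y₂ = y := Submodule.projection_add_projection_eq_self h y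
  have hx1L : x₁ ∈ L₁ := (Submodule.linearProjOfIsCompl L₁ L₂ h x).2
  have hx2L : x₂ ∈ L₂ := (Submodule.linearProjOfIsCompl L₂ L₁ h.symm x).2
  have hy1L : y₁ ∈ L₁ := (Submodule.linearProjOfIsCompl L₁ L₂ h y).2
  have hy2L : y₂ ∈ L₂ := (Submodule.linearProjOfIsCompl L₂ L₁ h.symm y).2
  have hA0 : ω x y = 0 := by
    have : y ∈ ω.orthogonal A := hA.symm ▸ hy
    exact this x hx
  have h11 : ω x₁ y₁ = 0 := by
    have : y₁ ∈ ω.orthogonal L₁ := hL₁.symm ▸ hy1L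
    exact this x₁ hx1L
  have h22 : ω x₂ y₂ = 0 := by
    have : y₂ ∈ ω.orthogonal L₂ := hL₂.symm ▸ hy2L
    exact this x₂ hx2L
  have hexp : ω x₁ y₂ + ω x₂ y₁ = 0 := by
    have := hA0
    rw [← hxsum, ← hysum] at this
    simp only [map_add, LinearMap.add_apply] at this
    linear_combination this - h11 - h22
  have hskew : -ω y₁ x₂ = ω x₂ y₁ := LinearMap.IsAlt.neg halt y₁ x₂
  linear_combination hexp + hskew
end

section
/- Let (𝕍, ω) be a symplectic vector space with a Lagrangian decomposition 𝕍 = L₁ ⊕ L₂, and let A ⊆ 𝕍 be a Lagrangian subspace. Then the kernel (radical) of the symmetric bilinear form q^A(x,y) = ω(pr₁(x), pr₂(y)) on A equals (A ∩ L₁) ⊕ (A ∩ L₂). -/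
/-!
Since `L₂` is isotropic, `ω (pr₁ x) (pr₂ y) = ω x (pr₂ y)`, so `y ∈ A` lies in the kernel of `q^A`
exactly when `pr₂ y ∈ ω.orthogonal A = A`. On the other hand, `y ∈ A` splits as an element of
`A ∩ L₁` plus one of `A ∩ L₂` exactly when its `L₂`-component `pr₂ y` lies in `A`.
-/

namespace Submodule

variable {R E : Type*} [Ring R] [AddCommGroup E] [Module R E] {p q : Submodule R E}

theorem mem_inf_sup_inf_iff_projection_mem (hpq : IsCompl p q) {A : Submodule R E} {y : E}
    (hy : y ∈ A) : y ∈ A ⊓ p ⊔ A ⊓ q ↔ q.projection p hpq.symm y ∈ A := by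
  constructor
  · intro hmem
    obtain ⟨a, ⟨-, hap⟩, b, ⟨hbA, hbq⟩, rfl⟩ := mem_sup.1 hmem
    rwa [map_add, projection_apply_of_mem_right hpq.symm hap,
      projection_apply_of_mem_left hpq.symm hbq, zero_add]
  · intro hproj
    have hpA : p.projection q hpq y ∈ A := by
      rw [projection_eq_self_sub_projection hpq.symm y]
      exact A.sub_mem hy hproj
    exact mem_sup.2 ⟨_, ⟨hpA, projection_apply_mem hpq y⟩, _, ⟨hproj, projection_apply_mem _ y⟩,
      projection_add_projection_eq_self hpq y⟩

end Submodule

namespace LinearMap.BilinForm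

variable {R E : Type*} [CommRing R] [AddCommGroup E] [Module R E] {p q : Submodule R E}

theorem apply_projection_left_of_le_orthogonal (B : LinearMap.BilinForm R E)
    (hq : q ≤ B.orthogonal q) (hpq : IsCompl p q) (x : E) {y : E} (hy : y ∈ q) :
    B (p.projection q hpq x) y = B x y := by
  have hqx : B (q.projection p hpq.symm x) y = 0 := hq hy _ (Submodule.projection_apply_mem _ x)
  calc B (p.projection q hpq x) y
      = B (p.projection q hpq x + q.projection p hpq.symm x) y := by
        rw [map_add, LinearMap.add_apply, hqx, add_zero]
    _ = B x y := by rw [Submodule.projection_add_projection_eq_self]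

end LinearMap.BilinForm

theorem stmt_1_general {k V : Type*} [Field k] [AddCommGroup V] [Module k V]
    (ω : LinearMap.BilinForm k V)
    (L₁ L₂ A : Submodule k V)
    (hL₂ : ω.orthogonal L₂ = L₂) (hA : ω.orthogonal A = A)
    (h : IsCompl L₁ L₂) :
    ∀ y ∈ A,
      ((∀ x ∈ A,
          ω (Submodule.linearProjOfIsCompl L₁ L₂ h x)
            (Submodule.linearProjOfIsCompl L₂ L₁ h.symm y) = 0)
        ↔ y ∈ (A ⊓ L₁) ⊔ (A ⊓ L₂)) := by
  intro y hy
  set z := L₂.projection L₁ h.symm y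
  calc (∀ x ∈ A, ω (L₁.projection L₂ h x) z = 0)
      ↔ ∀ x ∈ A, ω x z = 0 := forall₂_congr fun x _ => by
        rw [LinearMap.BilinForm.apply_projection_left_of_le_orthogonal ω hL₂.ge h x
          (Submodule.projection_apply_mem _ y)]
    _ ↔ z ∈ A := by rw [← LinearMap.BilinForm.mem_orthogonal_iff, hA]
    _ ↔ y ∈ A ⊓ L₁ ⊔ A ⊓ L₂ := (Submodule.mem_inf_sup_inf_iff_projection_mem h hy).symm

/-- Let `(𝕍, ω)` be a symplectic vector space with a Lagrangian decomposition
`𝕍 = L₁ ⊕ L₂`, and let `A ⊆ 𝕍` be a Lagrangian subspace. Then the kernel (radical) of the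
symmetric bilinear form `q^A(x,y) = ω(pr₁ x, pr₂ y)` on `A` equals `(A ∩ L₁) ⊕ (A ∩ L₂)`. -/
theorem stmt_1 {k V : Type*} [Field k] [AddCommGroup V] [Module k V] [FiniteDimensional k V]
    (ω : LinearMap.BilinForm k V) (halt : ω.IsAlt) (hnd : ω.Nondegenerate)
    (L₁ L₂ A : Submodule k V)
    (hL₁ : ω.orthogonal L₁ = L₁) (hL₂ : ω.orthogonal L₂ = L₂) (hA : ω.orthogonal A = A)
    (h : IsCompl L₁ L₂) :
    ∀ y ∈ A,
      ((∀ x ∈ A,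
          ω (Submodule.linearProjOfIsCompl L₁ L₂ h x)
            (Submodule.linearProjOfIsCompl L₂ L₁ h.symm y) = 0)
        ↔ y ∈ (A ⊓ L₁) ⊔ (A ⊓ L₂)) :=
  stmt_1_general ω L₁ L₂ A hL₂ hA h
end

section
/- Let (𝕍, ω) be a symplectic vector space with Lagrangian decomposition 𝕍 = L₁ ⊕ L₂ and let A ⊆ 𝕍 be Lagrangian. Then pr₁(A) = (A ∩ L₂)^⊥ ∩ L₁ and pr₂(A) = (A ∩ L₁)^⊥ ∩ L₂, where ⊥ denotes the ω-orthogonal complement. -/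
/-!
The projection of `A` to `L₁` along `L₂` is `(A + L₂) ∩ L₁`, and for Lagrangians
`(A ∩ L₂)^⊥ = A^⊥ + L₂^⊥ = A + L₂`: in finite dimension a nondegenerate reflexive form turns
intersections into sums, because its orthogonal complement is an involution that turns sums
into intersections.
-/

open Submodule

namespace Submodule

variable {R E : Type*} [Ring R] [AddCommGroup E] [Module R E]

theorem map_projection_eq_sup_inf {p q : Submodule R E} (h : IsCompl p q) (A : Submodule R E) :
    A.map (p.projection q h) = (A ⊔ q) ⊓ p := by
  apply le_antisymm
  · rintro _ ⟨a, ha, rfl⟩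
    refine ⟨?_, projection_apply_mem h a⟩
    rw [← sub_sub_cancel a (p.projection q h a)]
    exact sub_mem (mem_sup_left ha) (mem_sup_right (sub_projection_mem h a))
  · rintro x ⟨hx, hxp⟩
    obtain ⟨a, ha, l, hl, rfl⟩ := mem_sup.1 hx
    refine ⟨a, ha, ?_⟩
    rw [← projection_apply_of_mem_left h hxp, map_add, projection_apply_of_mem_right h hl,
      add_zero]

end Submodule

namespace LinearMap.BilinForm

theorem orthogonal_sup {R M : Type*} [CommSemiring R] [AddCommMonoid M] [Module R M]
    (B : LinearMap.BilinForm R M) (N L : Submodule R M) :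
    B.orthogonal (N ⊔ L) = B.orthogonal N ⊓ B.orthogonal L := by
  refine le_antisymm (le_inf (orthogonal_le le_sup_left) (orthogonal_le le_sup_right)) ?_
  rintro m ⟨hN, hL⟩
  exact (sup_le hN hL : N ⊔ L ≤ LinearMap.ker (B.flip m))

theorem orthogonal_inf {K V : Type*} [Field K] [AddCommGroup V] [Module K V]
    [FiniteDimensional K V] {B : LinearMap.BilinForm K V} (hB : B.Nondegenerate) (hB₀ : B.IsRefl)
    (W W' : Submodule K V) :
    B.orthogonal (W ⊓ W') = B.orthogonal W ⊔ B.orthogonal W' := by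
  rw [← orthogonal_orthogonal hB hB₀ (_ ⊔ _), orthogonal_sup, orthogonal_orthogonal hB hB₀,
    orthogonal_orthogonal hB hB₀]

end LinearMap.BilinForm

/-- Let `(𝕍, ω)` be a symplectic vector space with Lagrangian decomposition
`𝕍 = L₁ ⊕ L₂` and let `A ⊆ 𝕍` be Lagrangian. Then `pr₁(A) = (A ∩ L₂)^⊥ ∩ L₁` and
`pr₂(A) = (A ∩ L₁)^⊥ ∩ L₂`, where `⊥` denotes the `ω`-orthogonal complement. -/
theorem stmt_2 {k V : Type*} [Field k] [AddCommGroup V] [Module k V] [FiniteDimensional k V]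
    (ω : LinearMap.BilinForm k V) (halt : ω.IsAlt) (hnd : ω.Nondegenerate)
    (L₁ L₂ A : Submodule k V)
    (hL₁ : ω.orthogonal L₁ = L₁) (hL₂ : ω.orthogonal L₂ = L₂) (hA : ω.orthogonal A = A)
    (h : IsCompl L₁ L₂) :
    Submodule.map (L₁.subtype ∘ₗ Submodule.linearProjOfIsCompl L₁ L₂ h) A
        = ω.orthogonal (A ⊓ L₂) ⊓ L₁ ∧
    Submodule.map (L₂.subtype ∘ₗ Submodule.linearProjOfIsCompl L₂ L₁ h.symm) A
        = ω.orthogonal (A ⊓ L₁) ⊓ L₂ := by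
  have hrefl : ω.IsRefl := halt.isRefl
  rw [LinearMap.BilinForm.orthogonal_inf hnd hrefl, LinearMap.BilinForm.orthogonal_inf hnd hrefl,
    hA, hL₁, hL₂]
  exact ⟨map_projection_eq_sup_inf h A, map_projection_eq_sup_inf h.symm A⟩
end

section
/- Let W be a finite-dimensional vector space, W₁ ⊆ W a 1-dimensional subspace, and q : V₆ → Sym²W^∨ a linear map from a vector space V₆ with a fixed hyperplane V₅ ⊂ V₆. Suppose that for some (equivalently, every) v ∈ V₆ ∖ V₅ the quadratic form q(v) does not vanish on W₁ (i.e., W₁ is not contained in the quadric Q(v)). Let W₀ be the orthogonal complement of W₁ with respect to the bilinear form of q(v) for v ∉ V₅, and suppose that q(V₅) ⊆ Sym²W₀^∨. Then there is a unique direct sum decomposition W = W₀ ⊕ W₁ such that q(v) ∈ Sym²W₀^∨ ⊕ Sym²W₁^∨ ⊆ Sym²W^∨ for all v ∈ V₆; explicitly, W₀ is the orthogonal complement of W₁ with respect to the bilinear form of q(v) for any v ∉ V₅. -/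
lemma aux_orth {k W V₆ : Type*} [Field k]
    [AddCommGroup W] [Module k W] [FiniteDimensional k W]
    [AddCommGroup V₆] [Module k V₆]
    (V₅ : Submodule k V₆)
    (hhyp : ∀ v ∉ V₅, V₅ ⊔ (Submodule.span k {v}) = ⊤)
    (W₁ : Submodule k W) (hW₁ : Module.finrank k W₁ = 1)
    (q : V₆ →ₗ[k] LinearMap.BilinForm k W)
    (hsymm : ∀ (v : V₆) (x y : W), q v x y = q v y x)
    (hnd : ∀ v ∉ V₅, ∀ w ∈ W₁, w ≠ 0 → q v w w ≠ 0)
    (hkill : ∀ v ∈ V₅, ∀ w₁ ∈ W₁, ∀ w : W, q v w₁ w = 0)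
    (v₀ : V₆) (hv₀ : v₀ ∉ V₅) :
    IsCompl (LinearMap.BilinForm.orthogonal (q v₀) W₁) W₁ ∧
      (∀ v : V₆, ∀ w₀ ∈ LinearMap.BilinForm.orthogonal (q v₀) W₁,
        ∀ w₁ ∈ W₁, q v w₀ w₁ = 0) := by
  set W₀ := LinearMap.BilinForm.orthogonal (q v₀) W₁ with hW₀
  -- get a generator of W₁
  have hne : W₁ ≠ ⊥ := by
    intro h
    rw [h] at hW₁
    simp at hW₁
  obtain ⟨w₁, hw₁W, hw₁ne⟩ := Submodule.exists_mem_ne_zero_of_ne_bot hne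
  have hspan : W₁ = Submodule.span k {w₁} := by
    symm
    apply Submodule.eq_of_le_of_finrank_eq
    · rwa [Submodule.span_singleton_le_iff_mem]
    · rw [hW₁, finrank_span_singleton hw₁ne]
  have hqne : (q v₀) w₁ w₁ ≠ 0 := hnd v₀ hv₀ w₁ hw₁W hw₁ne
  -- membership in W₀
  have hmem : ∀ w : W, w ∈ W₀ ↔ (q v₀) w₁ w = 0 := by
    intro w
    constructor
    · intro hw
      exact hw w₁ hw₁W
    · intro h u hu
      rw [hspan, Submodule.mem_span_singleton] at hu
      obtain ⟨c, rfl⟩ := hu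
      simp [LinearMap.BilinForm.IsOrtho, h]
  -- cross terms vanish
  have hcross : ∀ v : V₆, ∀ w₀ ∈ W₀, ∀ u ∈ W₁, q v w₀ u = 0 := by
    intro v w₀ hw₀ u hu
    have hv : v ∈ V₅ ⊔ Submodule.span k {v₀} := by rw [hhyp v₀ hv₀]; trivial
    rw [Submodule.mem_sup] at hv
    obtain ⟨a, ha, b, hb, rfl⟩ := hv
    rw [Submodule.mem_span_singleton] at hb
    obtain ⟨t, rfl⟩ := hb
    have h1 : q a w₀ u = 0 := by rw [hsymm]; exact hkill a ha u hu w₀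
    have h2 : q v₀ w₀ u = 0 := by
      rw [hsymm]
      rw [hspan, Submodule.mem_span_singleton] at hu
      obtain ⟨c, rfl⟩ := hu
      have := (hmem w₀).mp hw₀
      simp [this]
    simp [map_add, map_smul, h1, h2]
  refine ⟨⟨?_, ?_⟩, hcross⟩
  · -- disjoint
    rw [disjoint_iff]
    rw [Submodule.eq_bot_iff]
    intro x hx
    rw [Submodule.mem_inf] at hx
    by_contra hxne
    have h1 : q v₀ x x = 0 := hcross v₀ x hx.1 x hx.2
    exact hnd v₀ hv₀ x hx.2 hxne h1
  · -- codisjoint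
    rw [codisjoint_iff]
    rw [eq_top_iff]
    intro w _
    set c := (q v₀) w₁ w / (q v₀) w₁ w₁ with hc
    have h1 : w - c • w₁ ∈ W₀ := by
      rw [hmem]
      simp only [map_sub, map_smul, smul_eq_mul]
      rw [hc]
      field_simp
      ring
    have h2 : c • w₁ ∈ W₁ := Submodule.smul_mem _ _ hw₁W
    have : w = (w - c • w₁) + c • w₁ := by abel
    rw [this]
    exact Submodule.add_mem_sup h1 h2

/-- Let `W` be a finite-dimensional vector space, `W₁ ⊆ W` a 1-dimensional
subspace, `V₅ ⊂ V₆` a hyperplane, and `q : V₆ → Sym²W^∨` a linear family of symmetric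
bilinear forms on `W`. Suppose that for every `v ∈ V₆ ∖ V₅` the form `q(v)` does not vanish
on `W₁`, and that `q(v')` kills `W₁` (i.e. `W₁ ⊆ Ker q(v')`) for all `v' ∈ V₅`. Then there
is a unique direct sum decomposition `W = W₀ ⊕ W₁` such that
`q(v) ∈ Sym²W₀^∨ ⊕ Sym²W₁^∨ ⊆ Sym²W^∨` (i.e. the cross terms between `W₀` and `W₁`
vanish) for all `v ∈ V₆`; explicitly, `W₀` is the orthogonal complement of `W₁` with
respect to `q(v)` for any `v ∉ V₅`. -/
theorem stmt_11 {k W V₆ : Type*} [Field k]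
    [AddCommGroup W] [Module k W] [FiniteDimensional k W]
    [AddCommGroup V₆] [Module k V₆]
    (V₅ : Submodule k V₆) (hV₅ : V₅ ≠ ⊤)
    (hhyp : ∀ v ∉ V₅, V₅ ⊔ (Submodule.span k {v}) = ⊤)
    (W₁ : Submodule k W) (hW₁ : Module.finrank k W₁ = 1)
    (q : V₆ →ₗ[k] LinearMap.BilinForm k W)
    (hsymm : ∀ (v : V₆) (x y : W), q v x y = q v y x)
    (hnd : ∀ v ∉ V₅, ∀ w ∈ W₁, w ≠ 0 → q v w w ≠ 0)
    (hkill : ∀ v ∈ V₅, ∀ w₁ ∈ W₁, ∀ w : W, q v w₁ w = 0) :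
    ∃ W₀ : Submodule k W, IsCompl W₀ W₁ ∧
      (∀ v : V₆, ∀ w₀ ∈ W₀, ∀ w₁ ∈ W₁, q v w₀ w₁ = 0) ∧
      (∀ W₀' : Submodule k W, IsCompl W₀' W₁ →
        (∀ v : V₆, ∀ w₀ ∈ W₀', ∀ w₁ ∈ W₁, q v w₀ w₁ = 0) → W₀' = W₀) ∧
      (∀ v ∉ V₅, W₀ = LinearMap.BilinForm.orthogonal (q v) W₁) := by
  obtain ⟨v₀, hv₀⟩ : ∃ v₀, v₀ ∉ V₅ := by
    by_contra h
    push_neg at h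
    exact hV₅ (Submodule.eq_top_iff'.mpr h)
  obtain ⟨hcompl, hcross⟩ := aux_orth V₅ hhyp W₁ hW₁ q hsymm hnd hkill v₀ hv₀
  set W₀ := LinearMap.BilinForm.orthogonal (q v₀) W₁ with hW₀def
  have huniq : ∀ W₀' : Submodule k W, IsCompl W₀' W₁ →
      (∀ v : V₆, ∀ w₀ ∈ W₀', ∀ w₁ ∈ W₁, q v w₀ w₁ = 0) → W₀' = W₀ := by
    intro W₀' hc' hcr'
    have hle : W₀' ≤ W₀ := by
      intro x hx u hu
      show q v₀ u x = 0
      rw [hsymm]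
      exact hcr' v₀ x hx u hu
    have : W₀ = W₀' ⊔ (W₁ ⊓ W₀) := by
      have h1 : (W₀' ⊔ W₁) ⊓ W₀ = W₀' ⊔ (W₁ ⊓ W₀) := sup_inf_assoc_of_le _ hle
      rw [codisjoint_iff.mp hc'.codisjoint, top_inf_eq] at h1
      exact h1
    rw [this, inf_comm, disjoint_iff.mp hcompl.disjoint, sup_bot_eq]
  refine ⟨W₀, hcompl, hcross, huniq, ?_⟩
  intro v hv
  obtain ⟨hcompl', hcross'⟩ := aux_orth V₅ hhyp W₁ hW₁ q hsymm hnd hkill v hv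
  exact (huniq _ hcompl' hcross').symm
end

section
/- Let (𝕍,ω) be a symplectic vector space with Lagrangian decomposition 𝕍 = L₁ ⊕ L₂, let A ⊆ 𝕍 be Lagrangian, let I ⊆ L₁ be a subspace, and let Ā ⊆ 𝕍̄ = I^⊥/I be the isotropic reduction of A. Then the quadratic form q^Ā on Ā (defined via the reduced decomposition 𝕍̄ = (L₁/I) ⊕ (L₂ ∩ I^⊥)) is induced by the restriction of q^A to A ∩ I^⊥: for x, y ∈ A ∩ I^⊥ with images x̄, ȳ ∈ Ā, one has q^Ā(x̄, ȳ) = q^A(x, y). -/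
/-!
Since `L₁` is Lagrangian and contains `I`, we have `L₁ ⊆ I^⊥`. Hence for `x ∈ I^⊥` both components
of the decomposition `x = pr₁ x + pr₂ x` along `𝕍 = L₁ ⊕ L₂` lie in `I^⊥`, and their classes in
`I^⊥/I` lie in `L₁/I` and `L₂ ∩ I^⊥` respectively; so `p̄r₁ x̄` and `p̄r₂ x̄` are the classes of
`pr₁ x` and `pr₂ x`, and `ω̄` evaluates on them as `ω` does.
-/

namespace Submodule

variable {R M N : Type*} [Ring R] [AddCommGroup M] [Module R M] [AddCommGroup N] [Module R N]

theorem projectionOnto_add_of_mem {p q : Submodule R M} (h : IsCompl p q) {a b : M}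
    (ha : a ∈ p) (hb : b ∈ q) : p.projectionOnto q h (a + b) = ⟨a, ha⟩ := by
  rw [map_add, projectionOnto_apply_of_mem_right h hb, add_zero]
  exact projectionOnto_apply_left h ⟨a, ha⟩

theorem projectionOnto_map_add_of_mem (f : M →ₗ[R] N) {p q : Submodule R M}
    (h : IsCompl (p.map f) (q.map f)) {a b : M} (ha : a ∈ p) (hb : b ∈ q) :
    ((p.map f).projectionOnto (q.map f) h (f (a + b)) : N) = f a := by
  rw [map_add, projectionOnto_add_of_mem h (mem_map_of_mem ha) (mem_map_of_mem hb)]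

variable {W p q : Submodule R M}

theorem projection_symm_mem_of_le (h : IsCompl p q) (hp : p ≤ W) {x : M} (hx : x ∈ W) :
    q.projection p h.symm x ∈ W := by
  rw [projection_eq_self_sub_projection h]
  exact W.sub_mem hx (hp (projection_apply_mem h x))

theorem projection_add_projection_symm_of_le (h : IsCompl p q) (hp : p ≤ W) (x : W) :
    (⟨p.projection q h x, hp (projection_apply_mem h x)⟩ : W) +
      ⟨q.projection p h.symm x, projection_symm_mem_of_le h hp x.2⟩ = x :=
  Subtype.ext (projection_add_projection_eq_self h x)

theorem projectionOnto_map_comap_subtype_apply (h : IsCompl p q) (hp : p ≤ W) (f : W →ₗ[R] N)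
    (hf : IsCompl ((p.comap W.subtype).map f) ((q.comap W.subtype).map f)) (x : W) :
    (projectionOnto _ _ hf (f x) : N) = f ⟨p.projection q h x, hp (projection_apply_mem h x)⟩ := by
  conv_lhs => rw [← projection_add_projection_symm_of_le h hp x]
  exact projectionOnto_map_add_of_mem f hf (projection_apply_mem h x)
    (projection_apply_mem h.symm x)

theorem projectionOnto_symm_map_comap_subtype_apply (h : IsCompl p q) (hp : p ≤ W)
    (f : W →ₗ[R] N) (hf : IsCompl ((p.comap W.subtype).map f) ((q.comap W.subtype).map f))
    (x : W) :
    (projectionOnto _ _ hf.symm (f x) : N) =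
      f ⟨q.projection p h.symm x, projection_symm_mem_of_le h hp x.2⟩ := by
  conv_lhs => rw [← projection_add_projection_symm_of_le h hp x, add_comm]
  exact projectionOnto_map_add_of_mem f hf.symm (projection_apply_mem h.symm x)
    (projection_apply_mem h x)

end Submodule

theorem stmt_13_general {k V : Type*} [Field k] [AddCommGroup V] [Module k V]
    (ω : LinearMap.BilinForm k V)
    (L₁ L₂ A : Submodule k V)
    (hL₁ : ω.orthogonal L₁ = L₁)
    (h : IsCompl L₁ L₂)
    (I : Submodule k V) (hIL₁ : I ≤ L₁)
    (ωbar : LinearMap.BilinForm k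
      ((ω.orthogonal I) ⧸ (I.comap (ω.orthogonal I).subtype)))
    (hcompat : ∀ x y : ω.orthogonal I,
      ωbar (Submodule.Quotient.mk x) (Submodule.Quotient.mk y) = ω x y)
    (hbar : IsCompl
      (Submodule.map (I.comap (ω.orthogonal I).subtype).mkQ
        (L₁.comap (ω.orthogonal I).subtype))
      (Submodule.map (I.comap (ω.orthogonal I).subtype).mkQ
        (L₂.comap (ω.orthogonal I).subtype))) :
    ∀ x y : ω.orthogonal I, (x : V) ∈ A → (y : V) ∈ A →
      ωbar
        (Submodule.linearProjOfIsCompl _ _ hbar (Submodule.Quotient.mk x))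
        (Submodule.linearProjOfIsCompl _ _ hbar.symm (Submodule.Quotient.mk y))
      = ω (Submodule.linearProjOfIsCompl L₁ L₂ h (x : V))
          (Submodule.linearProjOfIsCompl L₂ L₁ h.symm (y : V)) := by
  intro x y _ _
  have hL₁I : L₁ ≤ ω.orthogonal I := hL₁ ▸ LinearMap.BilinForm.orthogonal_le hIL₁
  have hx := Submodule.projectionOnto_map_comap_subtype_apply h hL₁I _ hbar x
  have hy := Submodule.projectionOnto_symm_map_comap_subtype_apply h hL₁I _ hbar y
  rw [Submodule.mkQ_apply] at hx hy
  unfold Submodule.linearProjOfIsCompl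
  rw [hx, hy]
  exact hcompat _ _

/-- Let `(𝕍,ω)` be a symplectic vector space with Lagrangian decomposition
`𝕍 = L₁ ⊕ L₂`, let `A ⊆ 𝕍` be Lagrangian, let `I ⊆ L₁` be a subspace, and let
`Ā = (A ∩ I^⊥)/(A ∩ I) ⊆ 𝕍̄ = I^⊥/I` be the isotropic reduction of `A`. Then the quadratic
form `q^Ā` on `Ā` (defined via the reduced decomposition `𝕍̄ = (L₁/I) ⊕ (L₂ ∩ I^⊥)`) is
induced by the restriction of `q^A` to `A ∩ I^⊥`: for `x, y ∈ A ∩ I^⊥` with images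
`x̄, ȳ ∈ 𝕍̄`, one has `q^Ā(x̄, ȳ) = q^A(x, y)`. -/
theorem stmt_13 {k V : Type*} [Field k] [AddCommGroup V] [Module k V] [FiniteDimensional k V]
    (ω : LinearMap.BilinForm k V) (halt : ω.IsAlt) (hnd : ω.Nondegenerate)
    (L₁ L₂ A : Submodule k V)
    (hL₁ : ω.orthogonal L₁ = L₁) (hL₂ : ω.orthogonal L₂ = L₂) (hA : ω.orthogonal A = A)
    (h : IsCompl L₁ L₂)
    (I : Submodule k V) (hIL₁ : I ≤ L₁)
    (ωbar : LinearMap.BilinForm k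
      ((ω.orthogonal I) ⧸ (I.comap (ω.orthogonal I).subtype)))
    (hcompat : ∀ x y : ω.orthogonal I,
      ωbar (Submodule.Quotient.mk x) (Submodule.Quotient.mk y) = ω x y)
    (hbar : IsCompl
      (Submodule.map (I.comap (ω.orthogonal I).subtype).mkQ
        (L₁.comap (ω.orthogonal I).subtype))
      (Submodule.map (I.comap (ω.orthogonal I).subtype).mkQ
        (L₂.comap (ω.orthogonal I).subtype))) :
    ∀ x y : ω.orthogonal I, (x : V) ∈ A → (y : V) ∈ A →
      ωbar
        (Submodule.linearProjOfIsCompl _ _ hbar (Submodule.Quotient.mk x))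
        (Submodule.linearProjOfIsCompl _ _ hbar.symm (Submodule.Quotient.mk y))
      = ω (Submodule.linearProjOfIsCompl L₁ L₂ h (x : V))
          (Submodule.linearProjOfIsCompl L₂ L₁ h.symm (y : V)) :=
  stmt_13_general ω L₁ L₂ A hL₁ h I hIL₁ ωbar hcompat hbar
end

section
/- Let (𝕍,ω) be a symplectic vector space with Lagrangian decomposition 𝕍 = L₁ ⊕ L₂, A ⊆ 𝕍 Lagrangian, and I ⊆ L₁ a subspace with isotropic reduction 𝕍̄ = I^⊥/I and Ā = (A ∩ I^⊥)/(A ∩ I). Then the kernel of the induced quadratic form on the image W̄₂ = p̄r₂(Ā) ⊆ L̄₂ = L₂ ∩ I^⊥ equals (A ∩ (I ⊕ L̄₂))/(A ∩ I), and the span satisfies W̄₂^⊥ corresponds to (A ∩ L₁)/(A ∩ I) under the ω-pairing between L̄₁ and L̄₂. -/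
/-!
Isotropic reduction preserves the symplectic picture: the `ω̄`-orthogonal of a reduced subspace
`X̄` is the reduction of `X^⊥`, since `(X ∩ I^⊥)^⊥ = X^⊥ + I`. Hence `ω̄` is nondegenerate and
`L̄₁`, `L̄₂`, `Ā` are Lagrangian in `I^⊥/I`, while the reductions of `A ∩ (I ⊕ L̄₂)` and `A ∩ L₁`
are `Ā ∩ L̄₂` and `Ā ∩ L̄₁`; so it suffices to argue in `I^⊥/I` itself. There, with `P` the
projection onto `L₂` along `L₁`, isotropy of `L₁` and `L₂` gives
`ω(x, y) = ω(x, P y) + ω(P x, y)`. For `a, b ∈ A` this reads `ω(a, P b) = -ω(P a, b)`, so `P a` is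
in the radical of the form on `P(A)` iff `P a ∈ A^⊥ = A`; and `P(A) = L₂ ∩ (A + L₁)`, where
`A + L₁ = (A ∩ L₁)^⊥`.
-/

namespace LinearMap.BilinForm

section CommRing

variable {R M : Type*} [CommRing R] [AddCommGroup M] [Module R M] {B : LinearMap.BilinForm R M}

theorem orthogonal_sup_s14 (N₁ N₂ : Submodule R M) :
    B.orthogonal (N₁ ⊔ N₂) = B.orthogonal N₁ ⊓ B.orthogonal N₂ := by
  refine le_antisymm (le_inf (orthogonal_le le_sup_left) (orthogonal_le le_sup_right)) ?_
  rintro x ⟨hx₁, hx₂⟩ y hy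
  obtain ⟨y₁, hy₁, y₂, hy₂, rfl⟩ := Submodule.mem_sup.mp hy
  change B (y₁ + y₂) x = 0
  rw [map_add, LinearMap.add_apply, (hx₁ y₁ hy₁ : B y₁ x = 0), (hx₂ y₂ hy₂ : B y₂ x = 0), add_zero]

variable {L₁ L₂ : Submodule R M} (hc : IsCompl L₂ L₁)

theorem apply_eq_apply_projection_add_projection_apply (h₁ : L₁ ≤ B.orthogonal L₁)
    (h₂ : L₂ ≤ B.orthogonal L₂) (x y : M) :
    B x y = B x (L₂.projection L₁ hc y) + B (L₂.projection L₁ hc x) y := by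
  set P := L₂.projection L₁ hc
  set Q := L₁.projection L₂ hc.symm
  have hQ : ∀ u v, B (Q u) (Q v) = 0 :=
    fun u v ↦ h₁ (Submodule.projection_apply_mem _ v) _ (Submodule.projection_apply_mem _ u)
  have hP : ∀ u v, B (P u) (P v) = 0 :=
    fun u v ↦ h₂ (Submodule.projection_apply_mem _ v) _ (Submodule.projection_apply_mem _ u)
  have hx : P x + Q x = x := Submodule.projection_add_projection_eq_self hc x
  have hy : P y + Q y = y := Submodule.projection_add_projection_eq_self hc y
  calc B x y = B (P x + Q x) (P y + Q y) := by rw [hx, hy]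
    _ = B (P x + Q x) (P y) + B (P x) (P y + Q y) := by
      simp only [map_add, LinearMap.add_apply, hP, hQ]
      ring
    _ = B x (P y) + B (P x) y := by rw [hx, hy]

theorem mem_radical_map_projection_iff (hB : B.IsRefl) (h₁ : L₁ ≤ B.orthogonal L₁)
    (h₂ : L₂ ≤ B.orthogonal L₂) {A : Submodule R M} (hA : B.orthogonal A = A) (w : M) :
    (w ∈ A.map (L₂.projection L₁ hc) ∧ ∀ a ∈ A, L₂.projection L₁ hc a = w →
        ∀ w' ∈ A.map (L₂.projection L₁ hc), B a w' = 0) ↔ w ∈ A ⊓ L₂ := by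
  have key := apply_eq_apply_projection_add_projection_apply hc h₁ h₂
  have hAA : ∀ a ∈ A, ∀ b ∈ A, B a b = 0 := fun a ha b hb ↦ hA.ge hb a ha
  constructor
  · rintro ⟨⟨a, ha, rfl⟩, hrad⟩
    refine ⟨hA.le fun b hb ↦ hB _ _ ?_, Submodule.projection_apply_mem hc a⟩
    have := hrad a ha rfl _ ⟨b, hb, rfl⟩
    linear_combination hAA a ha b hb - key a b - this
  · rintro ⟨hwA, hwL₂⟩
    refine ⟨⟨w, hwA, Submodule.projection_apply_of_mem_left hc hwL₂⟩, ?_⟩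
    rintro a ha rfl _ ⟨b, hb, rfl⟩
    linear_combination hAA a ha b hb - key a b - hAA _ hwA b hb

end CommRing

section Field

variable {k V : Type*} [Field k] [AddCommGroup V] [Module k V] [FiniteDimensional k V]
  {B : LinearMap.BilinForm k V}

theorem orthogonal_inf_s14 (hB : B.Nondegenerate) (hB₀ : B.IsRefl) (W₁ W₂ : Submodule k V) :
    B.orthogonal (W₁ ⊓ W₂) = B.orthogonal W₁ ⊔ B.orthogonal W₂ := by
  rw [← orthogonal_orthogonal hB hB₀ (_ ⊔ _), orthogonal_sup_s14, orthogonal_orthogonal hB hB₀,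
    orthogonal_orthogonal hB hB₀]

theorem map_projection_eq_orthogonal_inf (hB : B.Nondegenerate) (hB₀ : B.IsRefl)
    {L₁ L₂ A : Submodule k V} (hc : IsCompl L₂ L₁) (h₁ : B.orthogonal L₁ = L₁)
    (h₂ : L₂ ≤ B.orthogonal L₂) (hA : B.orthogonal A = A) :
    A.map (L₂.projection L₁ hc) = B.orthogonal (A ⊓ L₁) ⊓ L₂ := by
  apply le_antisymm
  · rintro _ ⟨b, hb, rfl⟩
    refine ⟨fun c hc' ↦ ?_, Submodule.projection_apply_mem hc b⟩
    have := apply_eq_apply_projection_add_projection_apply hc h₁.ge h₂ c b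
    rw [Submodule.projection_apply_of_mem_right hc hc'.2, map_zero, LinearMap.zero_apply,
      add_zero, hA.ge hb c hc'.1] at this
    exact this.symm
  · rintro y ⟨hy, hyL₂⟩
    rw [orthogonal_inf_s14 hB hB₀, hA, h₁] at hy
    obtain ⟨a, ha, l, hl, rfl⟩ := Submodule.mem_sup.mp hy
    refine ⟨a, ha, ?_⟩
    simpa [Submodule.projection_apply_of_mem_right hc hl] using
      Submodule.projection_apply_of_mem_left hc hyL₂

end Field

section Reduction

variable {k V : Type*} [Field k] [AddCommGroup V] [Module k V]

/-- `X̄ = (X ∩ I^⊥)/(X ∩ I)`, as a subspace of `I^⊥/I`. -/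
def reduction (ω : LinearMap.BilinForm k V) (I X : Submodule k V) :
    Submodule k (ω.orthogonal I ⧸ I.comap (ω.orthogonal I).subtype) :=
  (X.comap (ω.orthogonal I).subtype).map (I.comap (ω.orthogonal I).subtype).mkQ

variable {ω : LinearMap.BilinForm k V} {I : Submodule k V}

@[simp]
theorem reduction_top : reduction ω I ⊤ = ⊤ := by
  simp [reduction]

@[simp]
theorem reduction_bot : reduction ω I ⊥ = ⊥ := by
  simp [reduction]

theorem reduction_inf_orthogonal (X : Submodule k V) :
    reduction ω I (X ⊓ ω.orthogonal I) = reduction ω I X := by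
  simp [reduction, Submodule.comap_inf]

theorem reduction_inf_sup (hI : I ≤ ω.orthogonal I) (X Y : Submodule k V) :
    reduction ω I (X ⊓ (I ⊔ Y)) = reduction ω I X ⊓ reduction ω I Y := by
  apply le_antisymm
  · rintro _ ⟨x, ⟨hxX, hxIY⟩, rfl⟩
    obtain ⟨i, hi, y, hy, hxy⟩ := Submodule.mem_sup.mp hxIY
    replace hxy : i + y = x := hxy
    have hyΩ : y ∈ ω.orthogonal I := by
      rw [show y = x - i by rw [← hxy]; abel]
      exact sub_mem x.2 (hI hi)
    refine ⟨⟨x, hxX, rfl⟩, ⟨y, hyΩ⟩, hy,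
      (Submodule.Quotient.eq (I.comap (ω.orthogonal I).subtype)).mpr ?_⟩
    change y - x ∈ I
    rw [← hxy, sub_add_cancel_right]
    exact neg_mem hi
  · rintro _ ⟨⟨x, hxX, rfl⟩, y, hy, hyx⟩
    have hxy : (x : V) - y ∈ I :=
      (Submodule.Quotient.eq (I.comap (ω.orthogonal I).subtype)).mp hyx.symm
    exact ⟨x, ⟨hxX, Submodule.mem_sup.mpr ⟨_, hxy, y, hy, sub_add_cancel _ _⟩⟩, rfl⟩

theorem reduction_sup_left (hI : I ≤ ω.orthogonal I) (Y : Submodule k V) :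
    reduction ω I (I ⊔ Y) = reduction ω I Y := by
  simpa using reduction_inf_sup hI ⊤ Y

variable {ωbar : LinearMap.BilinForm k (ω.orthogonal I ⧸ I.comap (ω.orthogonal I).subtype)}

theorem orthogonal_reduction
    (hω : ∀ x y : ω.orthogonal I,
      ωbar (Submodule.Quotient.mk x) (Submodule.Quotient.mk y) = ω x y)
    (X : Submodule k V) :
    ωbar.orthogonal (reduction ω I X) = reduction ω I (ω.orthogonal (X ⊓ ω.orthogonal I)) := by
  apply le_antisymm
  · intro u hu
    induction u using Submodule.Quotient.induction_on with | H x => ?_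
    refine ⟨x, fun y hy ↦ ?_, rfl⟩
    exact (hω ⟨y, hy.2⟩ x).symm.trans (hu _ ⟨⟨y, hy.2⟩, hy.1, rfl⟩)
  · rintro _ ⟨x, hx, rfl⟩ _ ⟨y, hy, rfl⟩
    exact (hω y x).trans (hx y ⟨hy, y.2⟩)

theorem orthogonal_reduction_eq [FiniteDimensional k V] (hnd : ω.Nondegenerate)
    (hrefl : ω.IsRefl) (hI : I ≤ ω.orthogonal I)
    (hω : ∀ x y : ω.orthogonal I,
      ωbar (Submodule.Quotient.mk x) (Submodule.Quotient.mk y) = ω x y)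
    (X : Submodule k V) :
    ωbar.orthogonal (reduction ω I X) = reduction ω I (ω.orthogonal X) := by
  rw [orthogonal_reduction hω, orthogonal_inf_s14 hnd hrefl, orthogonal_orthogonal hnd hrefl,
    sup_comm, reduction_sup_left hI]

theorem IsAlt.of_reduction (halt : ω.IsAlt)
    (hω : ∀ x y : ω.orthogonal I,
      ωbar (Submodule.Quotient.mk x) (Submodule.Quotient.mk y) = ω x y) :
    ωbar.IsAlt := by
  intro u
  induction u using Submodule.Quotient.induction_on with | H x => ?_
  rw [hω]
  exact halt x

theorem Nondegenerate.of_reduction [FiniteDimensional k V] (hnd : ω.Nondegenerate)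
    (halt : ω.IsAlt) (hI : I ≤ ω.orthogonal I)
    (hω : ∀ x y : ω.orthogonal I,
      ωbar (Submodule.Quotient.mk x) (Submodule.Quotient.mk y) = ω x y) :
    ωbar.Nondegenerate := by
  have hrefl : ωbar.IsRefl := (IsAlt.of_reduction halt hω).isRefl
  change LinearMap.Nondegenerate ωbar
  rw [hrefl.nondegenerate_iff_separatingLeft, LinearMap.separatingLeft_iff_ker_eq_bot,
    ← orthogonal_top_eq_ker hrefl, ← reduction_top,
    orthogonal_reduction_eq hnd halt.isRefl hI hω, orthogonal_top_eq_bot hnd, reduction_bot]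

end Reduction

end LinearMap.BilinForm

open LinearMap.BilinForm

theorem stmt_14_general {k V : Type*} [Field k] [AddCommGroup V] [Module k V] [FiniteDimensional k V]
    (ω : LinearMap.BilinForm k V) (halt : ω.IsAlt) (hnd : ω.Nondegenerate)
    (L₁ L₂ A : Submodule k V)
    (hL₁ : ω.orthogonal L₁ = L₁) (hL₂ : ω.orthogonal L₂ = L₂) (hA : ω.orthogonal A = A)
    (I : Submodule k V) (hIL₁ : I ≤ L₁)
    (ωbar : LinearMap.BilinForm k
      ((ω.orthogonal I) ⧸ (I.comap (ω.orthogonal I).subtype)))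
    (hcompat : ∀ x y : ω.orthogonal I,
      ωbar (Submodule.Quotient.mk x) (Submodule.Quotient.mk y) = ω x y)
    (Lb₁ Lb₂ Ab : Submodule k ((ω.orthogonal I) ⧸ (I.comap (ω.orthogonal I).subtype)))
    (hLb₁ : Lb₁ = Submodule.map (I.comap (ω.orthogonal I).subtype).mkQ
      (L₁.comap (ω.orthogonal I).subtype))
    (hLb₂ : Lb₂ = Submodule.map (I.comap (ω.orthogonal I).subtype).mkQ
      (L₂.comap (ω.orthogonal I).subtype))
    (hAb : Ab = Submodule.map (I.comap (ω.orthogonal I).subtype).mkQ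
      (A.comap (ω.orthogonal I).subtype))
    (hbar : IsCompl Lb₁ Lb₂)
    (W₂b : Submodule k ((ω.orthogonal I) ⧸ (I.comap (ω.orthogonal I).subtype)))
    (hW₂b : W₂b = Submodule.map
      (Lb₂.subtype ∘ₗ Submodule.linearProjOfIsCompl Lb₂ Lb₁ hbar.symm) Ab) :
    (∀ w, (w ∈ W₂b ∧ ∀ a ∈ Ab,
        (Lb₂.subtype ∘ₗ Submodule.linearProjOfIsCompl Lb₂ Lb₁ hbar.symm) a = w →
        ∀ w' ∈ W₂b, ωbar a w' = 0)
      ↔ w ∈ Submodule.map (I.comap (ω.orthogonal I).subtype).mkQ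
          ((A ⊓ (I ⊔ (L₂ ⊓ ω.orthogonal I))).comap (ω.orthogonal I).subtype)) ∧
    W₂b = ωbar.orthogonal
        (Submodule.map (I.comap (ω.orthogonal I).subtype).mkQ
          ((A ⊓ L₁).comap (ω.orthogonal I).subtype)) ⊓ Lb₂ := by
  have hIΩ : I ≤ ω.orthogonal I := hIL₁.trans (hL₁.symm.trans_le (ω.orthogonal_le hIL₁))
  have hLag : ∀ X, ω.orthogonal X = X → ωbar.orthogonal (reduction ω I X) = reduction ω I X :=
    fun X hX ↦ by rw [orthogonal_reduction_eq hnd halt.isRefl hIΩ hcompat, hX]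
  replace hLb₁ : Lb₁ = reduction ω I L₁ := hLb₁
  replace hLb₂ : Lb₂ = reduction ω I L₂ := hLb₂
  replace hAb : Ab = reduction ω I A := hAb
  have hradical : reduction ω I (A ⊓ (I ⊔ (L₂ ⊓ ω.orthogonal I))) = Ab ⊓ Lb₂ := by
    rw [reduction_inf_sup hIΩ, reduction_inf_orthogonal, hAb, hLb₂]
  have hAL₁ : reduction ω I (A ⊓ L₁) = Ab ⊓ Lb₁ := by
    rw [← sup_eq_right.mpr hIL₁, reduction_inf_sup hIΩ, hAb, hLb₁]
  have hLb₁Lag : ωbar.orthogonal Lb₁ = Lb₁ := hLb₁ ▸ hLag L₁ hL₁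
  have hLb₂Lag : ωbar.orthogonal Lb₂ = Lb₂ := hLb₂ ▸ hLag L₂ hL₂
  have hAbLag : ωbar.orthogonal Ab = Ab := hAb ▸ hLag A hA
  have hrefl : ωbar.IsRefl := (IsAlt.of_reduction halt hcompat).isRefl
  subst hW₂b
  unfold reduction at hradical hAL₁
  rw [hradical, hAL₁]
  exact ⟨mem_radical_map_projection_iff hbar.symm hrefl hLb₁Lag.ge hLb₂Lag.ge hAbLag,
    map_projection_eq_orthogonal_inf (Nondegenerate.of_reduction hnd halt hIΩ hcompat) hrefl
      hbar.symm hLb₁Lag hLb₂Lag.ge hAbLag⟩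

/-- Let `(𝕍,ω)` be a symplectic vector space with Lagrangian decomposition
`𝕍 = L₁ ⊕ L₂`, `A ⊆ 𝕍` Lagrangian, and `I ⊆ L₁` a subspace, with isotropic reduction
`𝕍̄ = I^⊥/I`, `L̄₁ = L₁/I`, `L̄₂ = L₂ ∩ I^⊥` and `Ā = (A ∩ I^⊥)/(A ∩ I)`. Then the kernel of
the quadratic form induced (via `q^Ā`, i.e. via `ω̄(a, ·)`) on the image `W̄₂ = p̄r₂(Ā) ⊆ L̄₂`
equals `(A ∩ (I ⊕ L̄₂))/(A ∩ I)`, and the span satisfies: `W̄₂` is the intersection of `L̄₂`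
with the `ω̄`-orthogonal of `(A ∩ L₁)/(A ∩ I)`. -/
theorem stmt_14 {k V : Type*} [Field k] [AddCommGroup V] [Module k V] [FiniteDimensional k V]
    (ω : LinearMap.BilinForm k V) (halt : ω.IsAlt) (hnd : ω.Nondegenerate)
    (L₁ L₂ A : Submodule k V)
    (hL₁ : ω.orthogonal L₁ = L₁) (hL₂ : ω.orthogonal L₂ = L₂) (hA : ω.orthogonal A = A)
    (h : IsCompl L₁ L₂)
    (I : Submodule k V) (hIL₁ : I ≤ L₁)
    (ωbar : LinearMap.BilinForm k
      ((ω.orthogonal I) ⧸ (I.comap (ω.orthogonal I).subtype)))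
    (hcompat : ∀ x y : ω.orthogonal I,
      ωbar (Submodule.Quotient.mk x) (Submodule.Quotient.mk y) = ω x y)
    (Lb₁ Lb₂ Ab : Submodule k ((ω.orthogonal I) ⧸ (I.comap (ω.orthogonal I).subtype)))
    (hLb₁ : Lb₁ = Submodule.map (I.comap (ω.orthogonal I).subtype).mkQ
      (L₁.comap (ω.orthogonal I).subtype))
    (hLb₂ : Lb₂ = Submodule.map (I.comap (ω.orthogonal I).subtype).mkQ
      (L₂.comap (ω.orthogonal I).subtype))
    (hAb : Ab = Submodule.map (I.comap (ω.orthogonal I).subtype).mkQ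
      (A.comap (ω.orthogonal I).subtype))
    (hbar : IsCompl Lb₁ Lb₂)
    (W₂b : Submodule k ((ω.orthogonal I) ⧸ (I.comap (ω.orthogonal I).subtype)))
    (hW₂b : W₂b = Submodule.map
      (Lb₂.subtype ∘ₗ Submodule.linearProjOfIsCompl Lb₂ Lb₁ hbar.symm) Ab) :
    (∀ w, (w ∈ W₂b ∧ ∀ a ∈ Ab,
        (Lb₂.subtype ∘ₗ Submodule.linearProjOfIsCompl Lb₂ Lb₁ hbar.symm) a = w →
        ∀ w' ∈ W₂b, ωbar a w' = 0)
      ↔ w ∈ Submodule.map (I.comap (ω.orthogonal I).subtype).mkQ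
          ((A ⊓ (I ⊔ (L₂ ⊓ ω.orthogonal I))).comap (ω.orthogonal I).subtype)) ∧
    W₂b = ωbar.orthogonal
        (Submodule.map (I.comap (ω.orthogonal I).subtype).mkQ
          ((A ⊓ L₁).comap (ω.orthogonal I).subtype)) ⊓ Lb₂ :=
  stmt_14_general ω halt hnd L₁ L₂ A hL₁ hL₂ hA I hIL₁ ωbar hcompat Lb₁ Lb₂ Ab hLb₁ hLb₂ hAb hbar
    W₂b hW₂b
end
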